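/- arXiv:2603.09765 — 2 statements merged into one kernel-verified Lean document; each statement's English description precedes it below -/
import Mathlib

section
/- Let σ > 0, h(δ) = cos δ · exp(−δ²/(2σ²)), and let σ_c > 0, C > 0, n > 0, ρ > 0 with ρ·C < 1. Define τ_eff(c) = (ρ·(σ_c^n/c^n + C))^(1/n), c_vis = σ_c·(ρ/(1 − ρ·C))^(1/n), τ_∞ = (ρ·C)^(1/n), and for c ≥ c_vis let α(c) ∈ [0, π/2] be the unique solution of h(α(c)) = τ_eff(c), and let α_∞ ∈ [0, π/2] be the unique solution of h(α_∞) = τ_∞. Then for all c_vis ≤ c₁ < c₂ one has α(c₁) < α(c₂) < α_∞. -/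
open Real

theorem stmt_7 (σ : ℝ) (hσ : 0 < σ)
    (h : ℝ → ℝ) (hdef : ∀ δ : ℝ, h δ = Real.cos δ * Real.exp (-(δ ^ 2) / (2 * σ ^ 2)))
    (σc C n ρ : ℝ)
    (hσc : 0 < σc) (hC : 0 < C) (hn : 0 < n) (hρ : 0 < ρ) (hρC : ρ * C < 1)
    (τeff : ℝ → ℝ)
    (hτ : ∀ c : ℝ, 0 < c → τeff c = (ρ * (σc ^ n / c ^ n + C)) ^ (1 / n))
    (cvis : ℝ) (hcvis : cvis = σc * (ρ / (1 - ρ * C)) ^ (1 / n))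
    (τinf : ℝ) (hτinf : τinf = (ρ * C) ^ (1 / n))
    (α : ℝ → ℝ)
    (hα : ∀ c : ℝ, cvis ≤ c → α c ∈ Set.Icc 0 (π / 2) ∧ h (α c) = τeff c)
    (αinf : ℝ) (hαinf : αinf ∈ Set.Icc 0 (π / 2) ∧ h αinf = τinf) :
    ∀ c₁ c₂ : ℝ, cvis ≤ c₁ → c₁ < c₂ → α c₁ < α c₂ ∧ α c₂ < αinf := by
  intro c₁ c₂ hc₁ hlt
  have h1ρC : 0 < 1 - ρ * C := by linarith
  have hcvispos : 0 < cvis := by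
    rw [hcvis]; positivity
  have hc₁pos : 0 < c₁ := lt_of_lt_of_le hcvispos hc₁
  have hc₂pos : 0 < c₂ := hc₁pos.trans hlt
  -- h is strictly decreasing on [0, π/2]
  have hanti : ∀ x y : ℝ, x ∈ Set.Icc 0 (π/2) → y ∈ Set.Icc 0 (π/2) → x < y →
      h y < h x := by
    intro x y hx hy hxy
    obtain ⟨hx0, hx1⟩ := hx
    obtain ⟨hy0, hy1⟩ := hy
    rw [hdef, hdef]
    have hpi := Real.pi_pos
    have hcoslt : Real.cos y < Real.cos x := by
      apply Real.strictAntiOn_cos ⟨hx0, by linarith⟩ ⟨hy0, by linarith⟩ hxy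
    have hcosy : 0 ≤ Real.cos y := Real.cos_nonneg_of_mem_Icc ⟨by linarith, hy1⟩
    have hexple : Real.exp (-(y ^ 2) / (2 * σ ^ 2)) ≤ Real.exp (-(x ^ 2) / (2 * σ ^ 2)) := by
      apply Real.exp_le_exp.2
      have hxy2 : x ^ 2 ≤ y ^ 2 := by nlinarith
      have h2σ : 0 < 2 * σ ^ 2 := by positivity
      apply div_le_div_of_nonneg_right (by linarith : -(y^2) ≤ -(x^2)) h2σ.le
    calc Real.cos y * Real.exp (-(y ^ 2) / (2 * σ ^ 2))
        ≤ Real.cos y * Real.exp (-(x ^ 2) / (2 * σ ^ 2)) :=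
          mul_le_mul_of_nonneg_left hexple hcosy
      _ < Real.cos x * Real.exp (-(x ^ 2) / (2 * σ ^ 2)) :=
          mul_lt_mul_of_pos_right hcoslt (Real.exp_pos _)
  -- τeff is strictly decreasing, and above τinf
  have hrpowlt : c₁ ^ n < c₂ ^ n := Real.rpow_lt_rpow hc₁pos.le hlt hn
  have hc₁n : 0 < c₁ ^ n := Real.rpow_pos_of_pos hc₁pos n
  have hσcn : 0 < σc ^ n := Real.rpow_pos_of_pos hσc n
  have hdivlt : σc ^ n / c₂ ^ n < σc ^ n / c₁ ^ n :=
    div_lt_div_of_pos_left hσcn hc₁n hrpowlt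
  have hdiv2pos : 0 < σc ^ n / c₂ ^ n := by positivity
  have h1n : 0 < 1 / n := by positivity
  have hτ21 : τeff c₂ < τeff c₁ := by
    rw [hτ c₁ hc₁pos, hτ c₂ hc₂pos]
    apply Real.rpow_lt_rpow (by positivity) (by nlinarith) h1n
  have hτinf2 : τinf < τeff c₂ := by
    rw [hτinf, hτ c₂ hc₂pos]
    apply Real.rpow_lt_rpow (by positivity) (by nlinarith) h1n
  obtain ⟨hmem1, heq1⟩ := hα c₁ hc₁
  obtain ⟨hmem2, heq2⟩ := hα c₂ (hc₁.trans hlt.le)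
  obtain ⟨hmeminf, heqinf⟩ := hαinf
  constructor
  · by_contra hcon
    push_neg at hcon
    rcases eq_or_lt_of_le hcon with he | hl
    · rw [he] at heq2; rw [heq2] at heq1; linarith [heq1 ▸ hτ21]
    · have := hanti _ _ hmem2 hmem1 hl
      rw [heq1, heq2] at this; linarith
  · by_contra hcon
    push_neg at hcon
    rcases eq_or_lt_of_le hcon with he | hl
    · rw [he] at heqinf; rw [heqinf] at heq2; linarith
    · have := hanti _ _ hmeminf hmem2 hl
      rw [heq2, heqinf] at this; linarith
end

section
/- Let σ > 0, h(δ) = cos δ · exp(−δ²/(2σ²)), and let σ_c > 0, C > 0, n > 0, ρ > 0 with ρ·C < 1. Define τ_eff(c) = (ρ·(σ_c^n/c^n + C))^(1/n), c_vis = σ_c·(ρ/(1 − ρ·C))^(1/n), τ_∞ = (ρ·C)^(1/n), for c ≥ c_vis let α(c) ∈ [0, π/2] be the unique solution of h(α(c)) = τ_eff(c), and let α_∞ ∈ [0, π/2] be the unique solution of h(α_∞) = τ_∞. If 0 < θ_max < 2α_∞, then there exists a unique c_crit > c_vis with 2α(c_crit) = θ_max; moreover θ_max > 2α(c) for every c ∈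 (c_vis, c_crit) and θ_max < 2α(c) for every c > c_crit. -/
open Real

theorem stmt_15 (σ : ℝ) (hσ : 0 < σ)
    (h : ℝ → ℝ) (hdef : ∀ δ : ℝ, h δ = Real.cos δ * Real.exp (-(δ ^ 2) / (2 * σ ^ 2)))
    (σc C n ρ : ℝ)
    (hσc : 0 < σc) (hC : 0 < C) (hn : 0 < n) (hρ : 0 < ρ) (hρC : ρ * C < 1)
    (τeff : ℝ → ℝ)
    (hτ : ∀ c : ℝ, 0 < c → τeff c = (ρ * (σc ^ n / c ^ n + C)) ^ (1 / n))
    (cvis : ℝ) (hcvis : cvis = σc * (ρ / (1 - ρ * C)) ^ (1 / n))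
    (τinf : ℝ) (hτinf : τinf = (ρ * C) ^ (1 / n))
    (α : ℝ → ℝ)
    (hα : ∀ c : ℝ, cvis ≤ c → α c ∈ Set.Icc 0 (π / 2) ∧ h (α c) = τeff c)
    (αinf : ℝ) (hαinf : αinf ∈ Set.Icc 0 (π / 2) ∧ h αinf = τinf)
    (θmax : ℝ) (hθ1 : 0 < θmax) (hθ2 : θmax < 2 * αinf) :
    ∃ ccrit : ℝ, cvis < ccrit ∧ 2 * α ccrit = θmax ∧
      (∀ c : ℝ, cvis < c → 2 * α c = θmax → c = ccrit) ∧
      (∀ c : ℝ, c ∈ Set.Ioo cvis ccrit → 2 * α c < θmax) ∧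
      (∀ c : ℝ, ccrit < c → θmax < 2 * α c) := by
  have hπ := Real.pi_pos
  -- h is strictly antitone on [0, π/2]
  have hanti : ∀ a b : ℝ, a ∈ Set.Icc 0 (π / 2) → b ∈ Set.Icc 0 (π / 2) → a < b →
      h b < h a := by
    rintro a b ⟨ha0, haπ⟩ ⟨hb0, hbπ⟩ hab
    rw [hdef a, hdef b]
    have hcos : Real.cos b < Real.cos a :=
      Real.strictAntiOn_cos ⟨ha0, by linarith⟩ ⟨hb0, by linarith⟩ hab
    have hcb : 0 ≤ Real.cos b := Real.cos_nonneg_of_mem_Icc ⟨by linarith, hbπ⟩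
    have hs : (0:ℝ) < 2 * σ ^ 2 := by positivity
    have hsq : a ^ 2 ≤ b ^ 2 := by nlinarith
    have hEab : Real.exp (-(b ^ 2) / (2 * σ ^ 2)) ≤ Real.exp (-(a ^ 2) / (2 * σ ^ 2)) := by
      apply Real.exp_le_exp.mpr
      exact (div_le_div_iff_of_pos_right hs).mpr (by linarith)
    calc Real.cos b * Real.exp (-(b ^ 2) / (2 * σ ^ 2))
        ≤ Real.cos b * Real.exp (-(a ^ 2) / (2 * σ ^ 2)) :=
          mul_le_mul_of_nonneg_left hEab hcb
      _ < Real.cos a * Real.exp (-(a ^ 2) / (2 * σ ^ 2)) :=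
          mul_lt_mul_of_pos_right hcos (Real.exp_pos _)
  -- order reflection
  have hrefl : ∀ a b : ℝ, a ∈ Set.Icc 0 (π / 2) → b ∈ Set.Icc 0 (π / 2) →
      h a = h b → a = b := by
    intro a b ha hb hab
    rcases lt_trichotomy a b with hl | he | hg
    · exact absurd hab (ne_of_gt (hanti a b ha hb hl))
    · exact he
    · exact absurd hab (ne_of_lt (hanti b a hb ha hg))
  -- τeff is strictly antitone on positives
  have hτanti : ∀ c1 c2 : ℝ, 0 < c1 → c1 < c2 → τeff c2 < τeff c1 := by
    intro c1 c2 h1 h12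
    have h2 : 0 < c2 := lt_trans h1 h12
    rw [hτ c1 h1, hτ c2 h2]
    have h1n : (0:ℝ) < c1 ^ n := Real.rpow_pos_of_pos h1 n
    have h2n : (0:ℝ) < c2 ^ n := Real.rpow_pos_of_pos h2 n
    have hcn : c1 ^ n < c2 ^ n := Real.rpow_lt_rpow h1.le h12 hn
    have hσn : (0:ℝ) < σc ^ n := Real.rpow_pos_of_pos hσc n
    have hdiv : σc ^ n / c2 ^ n < σc ^ n / c1 ^ n :=
      div_lt_div_of_pos_left hσn h1n hcn
    apply Real.rpow_lt_rpow (by positivity) ?_ (by positivity)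
    nlinarith
  -- basic properties of t = h (θmax/2)
  have hθπ : θmax / 2 ∈ Set.Icc 0 (π / 2) :=
    ⟨by linarith, by linarith [hαinf.1.2]⟩
  set t : ℝ := h (θmax / 2) with ht
  have ht1 : t < 1 := by
    have h0 : h 0 = 1 := by rw [hdef 0]; norm_num
    have := hanti 0 (θmax / 2) ⟨le_rfl, by linarith⟩ hθπ (by linarith)
    rw [h0] at this; exact this
  have hτinf_pos : 0 < τinf := by
    rw [hτinf]; exact Real.rpow_pos_of_pos (by positivity) _
  have htτ : τinf < t := by
    have := hanti (θmax / 2) αinf hθπ hαinf.1 (by linarith)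
    rw [hαinf.2] at this; exact this
  have ht0 : 0 < t := lt_trans hτinf_pos htτ
  have htn : ρ * C < t ^ n := by
    have h1 : τinf ^ n < t ^ n := Real.rpow_lt_rpow hτinf_pos.le htτ hn
    have h2 : τinf ^ n = ρ * C := by
      rw [hτinf, ← Real.rpow_mul (by positivity), one_div_mul_cancel hn.ne',
        Real.rpow_one]
    linarith
  have htn1 : t ^ n < 1 := Real.rpow_lt_one ht0.le ht1 hn
  set D : ℝ := t ^ n - ρ * C with hD
  have hD0 : 0 < D := by simp only [hD]; linarith
  have hD1 : D < 1 - ρ * C := by simp only [hD]; linarith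
  -- the critical contrast
  set ccrit : ℝ := σc * (ρ / D) ^ (1 / n) with hcc
  have hccpos : 0 < ccrit := by
    have : (0:ℝ) < (ρ / D) ^ (1 / n) := Real.rpow_pos_of_pos (by positivity) _
    positivity
  have hcvis_pos : 0 < cvis := by
    rw [hcvis]
    have h1ρC : (0:ℝ) < 1 - ρ * C := by linarith
    have : (0:ℝ) < (ρ / (1 - ρ * C)) ^ (1 / n) :=
      Real.rpow_pos_of_pos (by positivity) _
    positivity
  have hcgt : cvis < ccrit := by
    rw [hcvis, hcc]
    have h1ρC : (0:ℝ) < 1 - ρ * C := by linarith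
    have hlt : ρ / (1 - ρ * C) < ρ / D := div_lt_div_of_pos_left hρ hD0 hD1
    exact mul_lt_mul_of_pos_left
      (Real.rpow_lt_rpow (by positivity) hlt (by positivity)) hσc
  -- τeff at ccrit
  have hkey : τeff ccrit = t := by
    rw [hτ _ hccpos]
    have hcn : ccrit ^ n = σc ^ n * (ρ / D) := by
      rw [hcc, Real.mul_rpow hσc.le (by positivity),
        ← Real.rpow_mul (by positivity), one_div_mul_cancel hn.ne', Real.rpow_one]
    have hσn : (0:ℝ) < σc ^ n := Real.rpow_pos_of_pos hσc n
    have harg : ρ * (σc ^ n / ccrit ^ n + C) = t ^ n := by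
      rw [hcn]
      field_simp
      simp only [hD]; ring
    rw [harg, ← Real.rpow_mul ht0.le, mul_one_div_cancel hn.ne', Real.rpow_one]
  -- comparison helpers
  have hcomp_lt : ∀ c : ℝ, cvis < c → c < ccrit → α c < θmax / 2 := by
    intro c hc1 hc2
    have hαc := hα c hc1.le
    have hτc : t < τeff c := by
      have := hτanti c ccrit (lt_trans hcvis_pos hc1) hc2
      rw [hkey] at this; exact this
    by_contra hcon
    push_neg at hcon
    rcases eq_or_lt_of_le hcon with he | hl
    · have : t = τeff c := by rw [ht, he, hαc.2]
      linarith
    · have := hanti (θmax / 2) (α c) hθπ hαc.1 hl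
      rw [hαc.2] at this; linarith
  have hcomp_gt : ∀ c : ℝ, ccrit < c → θmax / 2 < α c := by
    intro c hc
    have hc1 : cvis < c := lt_trans hcgt hc
    have hαc := hα c hc1.le
    have hτc : τeff c < t := by
      have := hτanti ccrit c hccpos hc
      rw [hkey] at this; exact this
    by_contra hcon
    push_neg at hcon
    rcases eq_or_lt_of_le hcon with he | hl
    · have : τeff c = t := by rw [← hαc.2, he, ht]
      linarith
    · have := hanti (α c) (θmax / 2) hαc.1 hθπ hl
      rw [hαc.2] at this; linarith
  -- value at ccrit
  have hαcrit : 2 * α ccrit = θmax := by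
    have hαc := hα ccrit hcgt.le
    have : α ccrit = θmax / 2 := by
      apply hrefl _ _ hαc.1 hθπ
      rw [hαc.2, hkey]
    linarith
  refine ⟨ccrit, hcgt, hαcrit, ?_, ?_, ?_⟩
  · intro c hc hc2
    rcases lt_trichotomy c ccrit with hl | he | hg
    · have := hcomp_lt c hc hl; linarith
    · exact he
    · have := hcomp_gt c hg; linarith
  · rintro c ⟨hc1, hc2⟩
    have := hcomp_lt c hc1 hc2; linarith
  · intro c hc
    have := hcomp_gt c hc; linarith
end
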